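/- Let Λ be a finite index set equipped with a pseudometric dist, and let J, R, ℓ > 0. Let v, h ∈ Matrix Λ Λ ℂ satisfy ‖v‖ ≤ J, ‖h‖ ≤ J, and v_{ij} = 0 whenever dist(i, j) > R. Then for any unit vectors ψ, φ ∈ ℂ^Λ whose supports are at distance greater than 2ℓ + R, one has |⟨ψ, [[v, h], h] φ⟩| ≤ 8 J² ‖h‖_ℓ; equivalently, ‖[[v,h],h]‖_{2ℓ+R} ≤ 8 J² ‖h‖_ℓ. -/

import Mathlib

/-- The l2 -> l2 operator norm of a matrix. -/
noncomputable def matOpNorm {Λ : Type*} [Fintype Λ] [DecidableEq Λ]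
    (m : Matrix Λ Λ ℂ) : ℝ :=
  ‖Matrix.toEuclideanCLM (𝕜 := ℂ) m‖

/-- The quantity ‖m‖_r : the supremum of |⟨ψ, m φ⟩| over l2-unit vectors ψ, φ whose
supports are at distance greater than r (all pairwise distances exceed r). -/
noncomputable def matDistNorm {Λ : Type*} [Fintype Λ] [DecidableEq Λ]
    [PseudoMetricSpace Λ] (m : Matrix Λ Λ ℂ) (r : ℝ) : ℝ :=
  sSup { x : ℝ | ∃ ψ φ : EuclideanSpace ℂ Λ, ‖ψ‖ = 1 ∧ ‖φ‖ = 1 ∧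
    (∀ i ∈ Function.support ψ, ∀ j ∈ Function.support φ, r < dist i j) ∧
    x = ‖(inner ℂ ψ (Matrix.toEuclideanCLM (𝕜 := ℂ) m φ) : ℂ)‖ }

/-!
If `S` lies more than `ℓ` away from `supp β`, the restriction of `h β` to `S` has norm at most
`‖h‖_ℓ ‖β‖`, because pairing it with `h β` gives its squared norm. Expand
`[[v, h], h] = v h h - 2 h v h + h h v` and cut `h φ` (in the first two terms) or `h (v φ)` (in the
last) into such a small restriction and a remainder supported within `ℓ` of `supp φ`, respectively
more than `ℓ` away from `supp ψ`. As `v` has range `R`, the remainder enters a pairing through `h`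
of two vectors whose supports are still more than `ℓ` apart, which `‖h‖_ℓ` bounds as well. Each
of the eight resulting pieces is at most `‖v‖ ‖h‖ ‖h‖_ℓ`.
-/

open Function
open scoped InnerProductSpace Matrix

local notation "𝐓" => Matrix.toEuclideanCLM (𝕜 := ℂ)

section

variable {Λ : Type*}

noncomputable def restrictTo (S : Set Λ) (x : EuclideanSpace ℂ Λ) : EuclideanSpace ℂ Λ :=
  WithLp.toLp 2 (S.indicator x)

section restrictTo

variable (S : Set Λ) (x : EuclideanSpace ℂ Λ)

@[simp]
lemma restrictTo_apply (i : Λ) : restrictTo S x i = S.indicator x i := rfl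

lemma support_restrictTo_subset : support (restrictTo S x) ⊆ S :=
  Set.support_indicator_subset

lemma restrictTo_add_restrictTo_compl : restrictTo S x + restrictTo Sᶜ x = x := by
  ext i
  simp [Set.indicator_self_add_compl_apply]

variable [Fintype Λ]

lemma norm_restrictTo_le : ‖restrictTo S x‖ ≤ ‖x‖ := by
  simp only [EuclideanSpace.norm_eq, restrictTo_apply]
  gcongr with i
  by_cases hi : i ∈ S <;> simp [hi]

lemma inner_restrictTo_self : ⟪restrictTo S x, x⟫_ℂ = ⟪restrictTo S x, restrictTo S x⟫_ℂ := by
  rw [PiLp.inner_apply, PiLp.inner_apply]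
  refine Finset.sum_congr rfl fun i _ => ?_
  by_cases hi : i ∈ S <;> simp [hi]

end restrictTo

section Locality

variable [PseudoMetricSpace Λ]

def FarApart (r : ℝ) (s t : Set Λ) : Prop :=
  ∀ i ∈ s, ∀ j ∈ t, r < dist i j

lemma FarApart.of_near {r r' a b : ℝ} {s t s' t' : Set Λ} (h : FarApart r' s t)
    (hr : a + r + b ≤ r') (hs : ∀ i ∈ s', ∃ x ∈ s, dist i x ≤ a)
    (ht : ∀ j ∈ t', ∃ y ∈ t, dist j y ≤ b) : FarApart r s' t' := by
  intro i hi j hj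
  obtain ⟨x, hx, hix⟩ := hs i hi
  obtain ⟨y, hy, hjy⟩ := ht j hj
  have := h x hx y hy
  have := dist_triangle4 x i j y
  rw [dist_comm x i] at this
  linarith

lemma FarApart.of_near_right {r r' b : ℝ} {s t t' : Set Λ} (h : FarApart r' s t)
    (hr : r + b ≤ r') (ht : ∀ j ∈ t', ∃ y ∈ t, dist j y ≤ b) : FarApart r s t' :=
  h.of_near (a := 0) (by linarith) (fun i hi => ⟨i, hi, (dist_self i).le⟩) ht

def VanishesBeyond (R : ℝ) (m : Matrix Λ Λ ℂ) : Prop :=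
  ∀ i j, R < dist i j → m i j = 0

lemma VanishesBeyond.conjTranspose {R : ℝ} {m : Matrix Λ Λ ℂ} (hm : VanishesBeyond R m) :
    VanishesBeyond R mᴴ := fun i j hij => by
  simp [hm j i (by rwa [dist_comm])]

end Locality

variable [Fintype Λ] [DecidableEq Λ]

lemma toEuclideanCLM_conjTranspose (m : Matrix Λ Λ ℂ) :
    𝐓 mᴴ = ContinuousLinearMap.adjoint (𝐓 m) := by
  rw [← Matrix.star_eq_conjTranspose, map_star, ContinuousLinearMap.star_eq_adjoint]

lemma norm_toEuclideanCLM_conjTranspose (m : Matrix Λ Λ ℂ) : ‖𝐓 mᴴ‖ = ‖𝐓 m‖ := by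
  rw [toEuclideanCLM_conjTranspose, LinearIsometryEquiv.norm_map]

lemma toEuclideanCLM_lie_lie_apply (v h : Matrix Λ Λ ℂ) (φ : EuclideanSpace ℂ Λ) :
    𝐓 ⁅⁅v, h⁆, h⁆ φ = 𝐓 v (𝐓 h (𝐓 h φ)) - 2 • 𝐓 h (𝐓 v (𝐓 h φ)) + 𝐓 h (𝐓 h (𝐓 v φ)) := by
  have : ⁅⁅v, h⁆, h⁆ = v * (h * h) - 2 • (h * (v * h)) + h * (h * v) := by
    simp only [Ring.lie_def]
    noncomm_ring
  simp only [this, map_add, map_sub, map_nsmul, map_mul]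
  rfl

variable [PseudoMetricSpace Λ]

lemma VanishesBeyond.support_apply {R : ℝ} {m : Matrix Λ Λ ℂ} (hm : VanishesBeyond R m)
    (x : EuclideanSpace ℂ Λ) : ∀ i ∈ support (𝐓 m x), ∃ j ∈ support x, dist i j ≤ R := by
  intro i hi
  by_contra! hfar
  refine hi ?_
  rw [Matrix.ofLp_toEuclideanCLM]
  refine Finset.sum_eq_zero fun j _ => ?_
  by_cases hj : x j = 0
  · simp [hj]
  · simp [hm i j (hfar j hj)]

lemma matDistNorm_nonneg (m : Matrix Λ Λ ℂ) (r : ℝ) : 0 ≤ matDistNorm m r :=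
  Real.sSup_nonneg <| by
    rintro _ ⟨ψ, φ, -, -, -, rfl⟩
    positivity

lemma matDistNorm_le {m : Matrix Λ Λ ℂ} {r c : ℝ} (hc : 0 ≤ c)
    (h : ∀ ψ φ : EuclideanSpace ℂ Λ, ‖ψ‖ = 1 → ‖φ‖ = 1 → FarApart r (support ψ) (support φ) →
      ‖⟪ψ, 𝐓 m φ⟫_ℂ‖ ≤ c) :
    matDistNorm m r ≤ c :=
  Real.sSup_le (by rintro _ ⟨ψ, φ, hψ, hφ, hsep, rfl⟩; exact h ψ φ hψ hφ hsep) hc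

lemma norm_inner_le_matDistNorm_of_norm_eq_one {m : Matrix Λ Λ ℂ} {r : ℝ}
    {ψ φ : EuclideanSpace ℂ Λ} (hψ : ‖ψ‖ = 1) (hφ : ‖φ‖ = 1)
    (hsep : FarApart r (support ψ) (support φ)) :
    ‖⟪ψ, 𝐓 m φ⟫_ℂ‖ ≤ matDistNorm m r := by
  refine le_csSup ⟨‖𝐓 m‖, ?_⟩ ⟨ψ, φ, hψ, hφ, hsep, rfl⟩
  rintro _ ⟨ψ, φ, hψ, hφ, -, rfl⟩
  calc ‖⟪ψ, 𝐓 m φ⟫_ℂ‖ ≤ ‖ψ‖ * ‖𝐓 m φ‖ := norm_inner_le_norm _ _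
    _ ≤ ‖ψ‖ * (‖𝐓 m‖ * ‖φ‖) := by gcongr; exact (𝐓 m).le_opNorm φ
    _ = ‖𝐓 m‖ := by rw [hψ, hφ, one_mul, mul_one]

lemma norm_inner_le_matDistNorm {m : Matrix Λ Λ ℂ} {r : ℝ} {α β : EuclideanSpace ℂ Λ}
    (hsep : FarApart r (support α) (support β)) :
    ‖⟪α, 𝐓 m β⟫_ℂ‖ ≤ matDistNorm m r * (‖α‖ * ‖β‖) := by
  rcases eq_or_ne α 0 with rfl | hα
  · simp
  rcases eq_or_ne β 0 with rfl | hβ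
  · simp
  have hα' : 0 < ‖α‖ := norm_pos_iff.2 hα
  have hβ' : 0 < ‖β‖ := norm_pos_iff.2 hβ
  have support_smul : ∀ (c : ℂ) (x : EuclideanSpace ℂ Λ), c ≠ 0 → support (c • x) = support x :=
    fun c x hc => by rw [WithLp.ofLp_smul, support_const_smul_of_ne_zero c _ hc]
  have hunit := norm_inner_le_matDistNorm_of_norm_eq_one (m := m)
    (norm_smul_inv_norm (𝕜 := ℂ) hα) (norm_smul_inv_norm (𝕜 := ℂ) hβ)
    (by rwa [support_smul _ α (by simpa using hα), support_smul _ β (by simpa using hβ)])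
  rw [map_smul, inner_smul_left, inner_smul_right, norm_mul, norm_mul] at hunit
  simp only [RCLike.norm_conj, norm_inv, RCLike.norm_ofReal, abs_norm] at hunit
  rw [inv_mul_le_iff₀ hα', inv_mul_le_iff₀ hβ'] at hunit
  linarith

lemma norm_restrictTo_toEuclideanCLM_apply_le {m : Matrix Λ Λ ℂ} {r : ℝ} {S : Set Λ}
    {β : EuclideanSpace ℂ Λ} (hS : FarApart r S (support β)) :
    ‖restrictTo S (𝐓 m β)‖ ≤ matDistNorm m r * ‖β‖ := by
  set γ := restrictTo S (𝐓 m β)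
  have hγ : ‖γ‖ * ‖γ‖ ≤ matDistNorm m r * ‖β‖ * ‖γ‖ := calc
    ‖γ‖ * ‖γ‖ = ‖⟪γ, 𝐓 m β⟫_ℂ‖ := by
      rw [inner_restrictTo_self, inner_self_eq_norm_sq_to_K, norm_pow, RCLike.norm_ofReal, abs_norm, sq]
    _ ≤ matDistNorm m r * (‖γ‖ * ‖β‖) :=
      norm_inner_le_matDistNorm fun i hi => hS i (support_restrictTo_subset _ _ hi)
    _ = matDistNorm m r * ‖β‖ * ‖γ‖ := by ring
  rcases (norm_nonneg γ).eq_or_lt with h0 | h0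
  · rw [← h0]
    exact mul_nonneg (matDistNorm_nonneg m r) (norm_nonneg β)
  · exact le_of_mul_le_mul_right hγ h0

lemma exists_add_of_farApart (m : Matrix Λ Λ ℂ) {r : ℝ} {S : Set Λ} {β : EuclideanSpace ℂ Λ}
    (hS : FarApart r S (support β)) :
    ∃ p q, 𝐓 m β = p + q ∧ ‖p‖ ≤ matDistNorm m r * ‖β‖ ∧ ‖q‖ ≤ ‖𝐓 m‖ * ‖β‖ ∧
      support q ⊆ Sᶜ :=
  ⟨_, _, (restrictTo_add_restrictTo_compl S _).symm, norm_restrictTo_toEuclideanCLM_apply_le hS,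
    (norm_restrictTo_le _ _).trans ((𝐓 m).le_opNorm β), support_restrictTo_subset _ _⟩

lemma exists_add_near (m : Matrix Λ Λ ℂ) (r : ℝ) (β : EuclideanSpace ℂ Λ) :
    ∃ p q, 𝐓 m β = p + q ∧ ‖p‖ ≤ matDistNorm m r * ‖β‖ ∧ ‖q‖ ≤ ‖𝐓 m‖ * ‖β‖ ∧
      ∀ i ∈ support q, ∃ j ∈ support β, dist i j ≤ r := by
  obtain ⟨p, q, hpq, hp, hq, hq_supp⟩ :=
    exists_add_of_farApart m (S := {i | ∀ j ∈ support β, r < dist i j}) fun i hi => hi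
  refine ⟨p, q, hpq, hp, hq, fun i hi => ?_⟩
  simpa using hq_supp hi

lemma norm_inner_apply_apply_le {E : Type*} [NormedAddCommGroup E] [InnerProductSpace ℂ E]
    (A B : E →L[ℂ] E) (ψ x : E) : ‖⟪ψ, A (B x)⟫_ℂ‖ ≤ ‖ψ‖ * (‖A‖ * (‖B‖ * ‖x‖)) :=
  (norm_inner_le_norm _ _).trans <| by
    gcongr
    exact (A.le_opNorm _).trans (by gcongr; exact B.le_opNorm x)

section DoubleCommutator

variable {R ℓ : ℝ} {v h : Matrix Λ Λ ℂ} {ψ φ : EuclideanSpace ℂ Λ}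

lemma norm_inner_vhh_le (hvR : VanishesBeyond R v)
    (hsep : FarApart (2 * ℓ + R) (support ψ) (support φ)) :
    ‖⟪ψ, 𝐓 v (𝐓 h (𝐓 h φ))⟫_ℂ‖ ≤ 2 * ‖𝐓 v‖ * ‖𝐓 h‖ * matDistNorm h ℓ * (‖ψ‖ * ‖φ‖) := by
  obtain ⟨p, q, hpq, hp, hq, hq_near⟩ := exists_add_near h ℓ φ
  have hfar : FarApart ℓ (support (𝐓 vᴴ ψ)) (support q) :=
    hsep.of_near (by linarith) (hvR.conjTranspose.support_apply ψ) hq_near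
  have hvHψ : ‖𝐓 vᴴ ψ‖ ≤ ‖𝐓 v‖ * ‖ψ‖ := by
    simpa [norm_toEuclideanCLM_conjTranspose] using (𝐓 vᴴ).le_opNorm ψ
  rw [hpq, map_add, map_add, inner_add_right]
  calc _ ≤ ‖ψ‖ * (‖𝐓 v‖ * (‖𝐓 h‖ * ‖p‖)) + matDistNorm h ℓ * (‖𝐓 vᴴ ψ‖ * ‖q‖) := by
        refine norm_add_le_of_le (norm_inner_apply_apply_le _ _ _ _) ?_
        rw [← ContinuousLinearMap.adjoint_inner_left, ← toEuclideanCLM_conjTranspose]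
        exact norm_inner_le_matDistNorm hfar
    _ ≤ ‖ψ‖ * (‖𝐓 v‖ * (‖𝐓 h‖ * (matDistNorm h ℓ * ‖φ‖))) +
          matDistNorm h ℓ * ((‖𝐓 v‖ * ‖ψ‖) * (‖𝐓 h‖ * ‖φ‖)) := by
        have := matDistNorm_nonneg h ℓ
        gcongr
    _ = _ := by ring

lemma norm_inner_hvh_le (hvR : VanishesBeyond R v)
    (hsep : FarApart (2 * ℓ + R) (support ψ) (support φ)) :
    ‖⟪ψ, 𝐓 h (𝐓 v (𝐓 h φ))⟫_ℂ‖ ≤ 2 * ‖𝐓 v‖ * ‖𝐓 h‖ * matDistNorm h ℓ * (‖ψ‖ * ‖φ‖) := by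
  obtain ⟨p, q, hpq, hp, hq, hq_near⟩ := exists_add_near h ℓ φ
  have hfar : FarApart ℓ (support ψ) (support (𝐓 v q)) :=
    (hsep.of_near_right (r := ℓ + R) (by linarith) hq_near).of_near_right (by linarith)
      (hvR.support_apply q)
  rw [hpq, map_add, map_add, inner_add_right]
  calc _ ≤ ‖ψ‖ * (‖𝐓 h‖ * (‖𝐓 v‖ * ‖p‖)) + matDistNorm h ℓ * (‖ψ‖ * ‖𝐓 v q‖) :=
        norm_add_le_of_le (norm_inner_apply_apply_le _ _ _ _) (norm_inner_le_matDistNorm hfar)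
    _ ≤ ‖ψ‖ * (‖𝐓 h‖ * (‖𝐓 v‖ * (matDistNorm h ℓ * ‖φ‖))) +
          matDistNorm h ℓ * (‖ψ‖ * (‖𝐓 v‖ * (‖𝐓 h‖ * ‖φ‖))) := by
        have := matDistNorm_nonneg h ℓ
        gcongr
        exact ((𝐓 v).le_opNorm q).trans (by gcongr)
    _ = _ := by ring

lemma norm_inner_hhv_le (hvR : VanishesBeyond R v)
    (hsep : FarApart (2 * ℓ + R) (support ψ) (support φ)) :
    ‖⟪ψ, 𝐓 h (𝐓 h (𝐓 v φ))⟫_ℂ‖ ≤ 2 * ‖𝐓 v‖ * ‖𝐓 h‖ * matDistNorm h ℓ * (‖ψ‖ * ‖φ‖) := by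
  have hS : FarApart ℓ {i | ∃ x ∈ support ψ, dist i x ≤ ℓ} (support (𝐓 v φ)) :=
    hsep.of_near (by linarith) (fun i hi => hi) (hvR.support_apply φ)
  obtain ⟨p, q, hpq, hp, hq, hq_supp⟩ := exists_add_of_farApart h hS
  have hfar : FarApart ℓ (support ψ) (support q) := fun i hi j hj => by
    by_contra! hle
    exact hq_supp hj ⟨i, hi, by rwa [dist_comm]⟩
  have hvφ : ‖𝐓 v φ‖ ≤ ‖𝐓 v‖ * ‖φ‖ := (𝐓 v).le_opNorm φ
  rw [hpq, map_add, inner_add_right]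
  calc _ ≤ ‖ψ‖ * (‖𝐓 h‖ * ‖p‖) + matDistNorm h ℓ * (‖ψ‖ * ‖q‖) := by
        refine norm_add_le_of_le ((norm_inner_le_norm _ _).trans ?_) (norm_inner_le_matDistNorm hfar)
        gcongr
        exact (𝐓 h).le_opNorm p
    _ ≤ ‖ψ‖ * (‖𝐓 h‖ * (matDistNorm h ℓ * (‖𝐓 v‖ * ‖φ‖))) +
          matDistNorm h ℓ * (‖ψ‖ * (‖𝐓 h‖ * (‖𝐓 v‖ * ‖φ‖))) := by
        have := matDistNorm_nonneg h ℓ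
        gcongr
        · exact hp.trans (by gcongr)
        · exact hq.trans (by gcongr)
    _ = _ := by ring

lemma norm_inner_toEuclideanCLM_lie_lie_le (hvR : VanishesBeyond R v)
    (hsep : FarApart (2 * ℓ + R) (support ψ) (support φ)) :
    ‖⟪ψ, 𝐓 ⁅⁅v, h⁆, h⁆ φ⟫_ℂ‖ ≤ 8 * ‖𝐓 v‖ * ‖𝐓 h‖ * matDistNorm h ℓ * (‖ψ‖ * ‖φ‖) := by
  rw [toEuclideanCLM_lie_lie_apply, ← Nat.cast_smul_eq_nsmul ℂ, inner_add_right, inner_sub_right,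
    inner_smul_right]
  have hvhh := norm_inner_vhh_le (h := h) hvR hsep
  have hhvh := norm_inner_hvh_le (h := h) hvR hsep
  have hhhv := norm_inner_hhv_le (h := h) hvR hsep
  refine (norm_add_le_of_le (norm_sub_le _ _) le_rfl).trans ?_
  rw [norm_mul, Nat.cast_ofNat, Complex.norm_ofNat]
  linarith

end DoubleCommutator

end

theorem double_commutator_distNorm_bound_general
    {Λ : Type*} [Fintype Λ] [DecidableEq Λ] [PseudoMetricSpace Λ]
    (J R ℓ : ℝ)
    (v h : Matrix Λ Λ ℂ)
    (hvJ : matOpNorm v ≤ J) (hhJ : matOpNorm h ≤ J)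
    (hvR : ∀ i j, R < dist i j → v i j = 0) :
    (∀ ψ φ : EuclideanSpace ℂ Λ, ‖ψ‖ = 1 → ‖φ‖ = 1 →
      (∀ i ∈ Function.support ψ, ∀ j ∈ Function.support φ, 2 * ℓ + R < dist i j) →
      ‖(inner ℂ ψ (Matrix.toEuclideanCLM (𝕜 := ℂ) ⁅⁅v, h⁆, h⁆ φ) : ℂ)‖ ≤
        8 * J ^ 2 * matDistNorm h ℓ) ∧
    matDistNorm ⁅⁅v, h⁆, h⁆ (2 * ℓ + R) ≤ 8 * J ^ 2 * matDistNorm h ℓ := by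
  have hD := matDistNorm_nonneg h ℓ
  have hJ : 0 ≤ J := (norm_nonneg _).trans hvJ
  have bound : ∀ ψ φ : EuclideanSpace ℂ Λ, ‖ψ‖ = 1 → ‖φ‖ = 1 →
      FarApart (2 * ℓ + R) (support ψ) (support φ) →
      ‖⟪ψ, 𝐓 ⁅⁅v, h⁆, h⁆ φ⟫_ℂ‖ ≤ 8 * J ^ 2 * matDistNorm h ℓ := by
    intro ψ φ hψ hφ hsep
    calc _ ≤ 8 * ‖𝐓 v‖ * ‖𝐓 h‖ * matDistNorm h ℓ * (‖ψ‖ * ‖φ‖) :=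
          norm_inner_toEuclideanCLM_lie_lie_le hvR hsep
      _ ≤ 8 * J * J * matDistNorm h ℓ * (1 * 1) := by
          rw [hψ, hφ]
          gcongr
          exacts [hvJ, hhJ]
      _ = 8 * J ^ 2 * matDistNorm h ℓ := by ring
  exact ⟨bound, matDistNorm_le (by positivity) bound⟩

/-- Bound on the double commutator [[v,h],h] at distance 2ℓ + R. -/
theorem double_commutator_distNorm_bound
    {Λ : Type*} [Fintype Λ] [DecidableEq Λ] [PseudoMetricSpace Λ]
    (J R ℓ : ℝ) (hJ : 0 < J) (hR : 0 < R) (hℓ : 0 < ℓ)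
    (v h : Matrix Λ Λ ℂ)
    (hvJ : matOpNorm v ≤ J) (hhJ : matOpNorm h ≤ J)
    (hvR : ∀ i j, R < dist i j → v i j = 0) :
    (∀ ψ φ : EuclideanSpace ℂ Λ, ‖ψ‖ = 1 → ‖φ‖ = 1 →
      (∀ i ∈ Function.support ψ, ∀ j ∈ Function.support φ, 2 * ℓ + R < dist i j) →
      ‖(inner ℂ ψ (Matrix.toEuclideanCLM (𝕜 := ℂ) ⁅⁅v, h⁆, h⁆ φ) : ℂ)‖ ≤
        8 * J ^ 2 * matDistNorm h ℓ) ∧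
    matDistNorm ⁅⁅v, h⁆, h⁆ (2 * ℓ + R) ≤ 8 * J ^ 2 * matDistNorm h ℓ :=
  double_commutator_distNorm_bound_general J R ℓ v h hvJ hhJ hvR
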